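/- arXiv:2207.13831 — 3 statements merged into one kernel-verified Lean document; each statement's English description precedes it below -/
import Mathlib

section
/- Let n ≥ 1, let L be an n×n real matrix, and for h ∈ ℝ set D(h) = I − h·L. Then for all indices i ≠ j, as h → 0, the (i,j) entry of the inverse matrix satisfies D(h)⁻¹[i,j] = h·L[i,j] / ((1 − h·L[i,i])·(1 − h·L[j,j])) + h² · Σ_{k ≠ i, k ≠ j} L[i,k]·L[k,j] + O(h³). -/
open Asymptotics Finset

theorem stmt_1 (n : ℕ) (hn : 1 ≤ n) (L : Matrix (Fin n) (Fin n) ℝ) (i j : Fin n)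
    (hij : i ≠ j) :
    (fun h : ℝ =>
        ((1 - h • L)⁻¹ : Matrix (Fin n) (Fin n) ℝ) i j -
          (h * L i j / ((1 - h * L i i) * (1 - h * L j j)) +
            h ^ 2 * ∑ k ∈ univ.filter (fun k => k ≠ i ∧ k ≠ j), L i k * L k j))
      =O[nhds (0 : ℝ)] fun h : ℝ => h ^ 3 := by
  set A : ℝ → Matrix (Fin n) (Fin n) ℝ := fun h => (1 - h • L)⁻¹ with hA
  have hBcont : Continuous (fun h : ℝ => (1 : Matrix (Fin n) (Fin n) ℝ) - h • L) :=
    continuous_const.sub (continuous_id.smul continuous_const)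
  -- continuity of inverse at 0
  have hAcont : ContinuousAt A 0 := by
    have h1 : ContinuousAt (Inv.inv : Matrix (Fin n) (Fin n) ℝ → _)
        ((1 : Matrix (Fin n) (Fin n) ℝ) - (0:ℝ) • L) := by
      rw [zero_smul, sub_zero]
      apply continuousAt_matrix_inv
      rw [Matrix.det_one, Ring.inverse_eq_inv']
      exact continuousAt_inv₀ one_ne_zero
    have h2 : ContinuousAt (Inv.inv ∘ fun h : ℝ => (1 : Matrix (Fin n) (Fin n) ℝ) - h • L) 0 :=
      ContinuousAt.comp (f := fun h : ℝ => (1 : Matrix (Fin n) (Fin n) ℝ) - h • L) (x := 0) h1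
        hBcont.continuousAt
    exact h2
  -- eventually the matrix is invertible and denominators are nonzero
  have hdet : ∀ᶠ h : ℝ in nhds 0, IsUnit ((1 - h • L : Matrix (Fin n) (Fin n) ℝ).det) := by
    have hc : ContinuousAt (fun h : ℝ => ((1 : Matrix (Fin n) (Fin n) ℝ) - h • L).det) 0 :=
      hBcont.matrix_det.continuousAt
    have h0 : ((1 : Matrix (Fin n) (Fin n) ℝ) - (0:ℝ) • L).det = 1 := by simp
    have := hc.eventually_ne (by rw [h0]; exact one_ne_zero)
    filter_upwards [this] with h hh
    exact isUnit_iff_ne_zero.mpr hh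
  have hdi : ∀ᶠ h : ℝ in nhds 0, (1 - h * L i i) ≠ 0 := by
    have hc : ContinuousAt (fun h : ℝ => 1 - h * L i i) 0 :=
      (continuous_const.sub (continuous_id.mul continuous_const)).continuousAt
    have := hc.eventually_ne (show (1 - (0:ℝ) * L i i) ≠ 0 by norm_num)
    simpa using this
  have hdj : ∀ᶠ h : ℝ in nhds 0, (1 - h * L j j) ≠ 0 := by
    have hc : ContinuousAt (fun h : ℝ => 1 - h * L j j) 0 :=
      (continuous_const.sub (continuous_id.mul continuous_const)).continuousAt
    have := hc.eventually_ne (show (1 - (0:ℝ) * L j j) ≠ 0 by norm_num)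
    simpa using this
  -- the remainder function
  set g : ℝ → ℝ := fun h =>
    (L * L * L * A h) i j +
      (L i j * (L i i * L j j) +
        L i j * (L i i + L j j) * (-(L i i + L j j) + h * (L i i * L j j))) /
        ((1 - h * L i i) * (1 - h * L j j)) with hg
  -- sum split
  have hsum : (L * L) i j
      = L i i * L i j + L i j * L j j
        + ∑ k ∈ univ.filter (fun k => k ≠ i ∧ k ≠ j), L i k * L k j := by
    rw [Matrix.mul_apply]
    have hfilter : (univ.filter (fun k => k ≠ i ∧ k ≠ j))
        = (univ : Finset (Fin n)) \ {i, j} := by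
      ext k; simp [and_comm]
    have hsub : ({i, j} : Finset (Fin n)) ⊆ univ := subset_univ _
    rw [← Finset.sum_sdiff hsub, hfilter, Finset.sum_pair hij]
    ring
  -- eventual equality with h^3 * g h
  have heq : ∀ᶠ h : ℝ in nhds 0,
      (A h i j - (h * L i j / ((1 - h * L i i) * (1 - h * L j j)) +
        h ^ 2 * ∑ k ∈ univ.filter (fun k => k ≠ i ∧ k ≠ j), L i k * L k j))
      = h ^ 3 * g h := by
    filter_upwards [hdet, hdi, hdj] with h hu hi hj
    -- entrywise expansion of the inverse
    have key : A h = 1 + h • (L * A h) := by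
      have hmul : (1 - h • L) * A h = 1 := Matrix.mul_nonsing_inv _ hu
      have : A h - h • (L * A h) = 1 := by
        calc A h - h • (L * A h) = (1 - h • L) * A h := by
              rw [Matrix.sub_mul, Matrix.one_mul, Matrix.smul_mul]
          _ = 1 := hmul
      rw [sub_eq_iff_eq_add] at this
      exact this
    have k2 : L * A h = L + h • (L * L * A h) := by
      conv_lhs => rw [key]
      simp [Matrix.mul_add, Matrix.mul_smul, Matrix.mul_assoc]
    have k3 : L * L * A h = L * L + h • (L * L * L * A h) := by
      conv_lhs => rw [key]
      simp [Matrix.mul_add, Matrix.mul_smul, Matrix.mul_assoc]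
    have key3 : A h = 1 + h • L + (h * h) • (L * L) + (h * (h * h)) • (L * L * L * A h) := by
      conv_lhs => rw [key]
      rw [k2, k3]
      simp only [smul_add, smul_smul, add_assoc]
    have e : A h i j = h * L i j + h ^ 2 * ((L * L) i j)
        + h ^ 3 * ((L * L * L * A h) i j) := by
      have := congrFun (congrFun key3 i) j
      simp only [Matrix.add_apply, Matrix.smul_apply, Matrix.one_apply_ne hij,
        smul_eq_mul] at this
      rw [this]; ring
    rw [e, hsum, hg]
    field_simp
    ring
  -- g is bounded near 0
  have hgO : g =O[nhds (0:ℝ)] (fun _ => (1:ℝ)) := by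
    have hc1 : ContinuousAt (fun h : ℝ => (L * L * L * A h) i j) 0 := by
      have hm : Continuous (fun M : Matrix (Fin n) (Fin n) ℝ => (L * L * L * M) i j) := by
        have : Continuous (fun M : Matrix (Fin n) (Fin n) ℝ => L * L * L * M) :=
          continuous_const.matrix_mul continuous_id
        exact (continuous_apply j).comp ((continuous_apply i).comp this)
      exact hm.continuousAt.comp hAcont
    have hc2 : ContinuousAt (fun h : ℝ =>
        (L i j * (L i i * L j j) +
          L i j * (L i i + L j j) * (-(L i i + L j j) + h * (L i i * L j j))) /
          ((1 - h * L i i) * (1 - h * L j j))) 0 := by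
      apply ContinuousAt.div
      · fun_prop
      · fun_prop
      · norm_num
    have : ContinuousAt g 0 := hc1.add hc2
    exact this.tendsto.isBigO_one ℝ
  calc (fun h : ℝ =>
        A h i j - (h * L i j / ((1 - h * L i i) * (1 - h * L j j)) +
          h ^ 2 * ∑ k ∈ univ.filter (fun k => k ≠ i ∧ k ≠ j), L i k * L k j))
      =O[nhds (0:ℝ)] (fun h : ℝ => h ^ 3 * g h) := by
        exact Filter.EventuallyEq.isBigO heq
    _ =O[nhds (0:ℝ)] (fun h : ℝ => h ^ 3) := by
        have := (isBigO_refl (fun h : ℝ => h ^ 3) (nhds 0)).mul hgO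
        simpa using this
end

section
/- Let n ≥ 1, let L be an n×n real matrix, and for h ∈ ℝ set D(h) = I − h·L. Then as h → 0, det(D(h)) = ∏_{k} D(h)[k,k] − Σ_{unordered pairs {i,j}, i ≠ j} D(h)[i,j]·D(h)[j,i]·∏_{l ∉ {i,j}} D(h)[l,l] + O(h³); that is, the determinant of D(h) equals the product of its diagonal entries minus the sum over all unordered pairs of distinct indices of the corresponding transposition terms, up to an error which is O(h³) as h → 0. -/
/-!
Expanding `det D = ∑_σ sign σ ∏ᵢ D (σ i) i` and sorting permutations by the size of their
support, the identity contributes the diagonal product and the transpositions the pair terms.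
Every other permutation moves at least three indices, and each moved index contributes an
off-diagonal factor `-h L (σ i) i`, so its term is `h³` times a polynomial in `h`.
-/

open Asymptotics Finset Equiv

theorem Equiv.swap_injOn_lt {α : Type*} [DecidableEq α] [Preorder α] :
    Set.InjOn (fun p : α × α => swap p.1 p.2) {p | p.1 < p.2} := by
  rintro ⟨a, b⟩ hab ⟨c, d⟩ hcd h
  have hb := congrArg (· a) h
  have hc := congrArg (· c) h
  simp only [swap_apply_def] at hb hc
  simp only [Set.mem_ofPred_eq] at hab hcd
  grind

namespace Matrix

variable {R ι : Type*} [CommRing R] [Fintype ι] [DecidableEq ι]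

theorem sign_swap_smul_prod_apply (M : Matrix ι ι R) {a b : ι} (hab : a ≠ b) :
    Perm.sign (Equiv.swap a b) • ∏ i, M (Equiv.swap a b i) i =
      -(M a b * M b a * ∏ l ∈ univ.filter (fun l => l ≠ a ∧ l ≠ b), M l l) := by
  have h_fixed : ∏ l ∈ univ.filter (fun l => l ≠ a ∧ l ≠ b), M (Equiv.swap a b l) l =
      ∏ l ∈ univ.filter (fun l => l ≠ a ∧ l ≠ b), M l l :=
    prod_congr rfl fun l hl => by
      rw [mem_filter] at hl
      rw [swap_apply_of_ne_of_ne hl.2.1 hl.2.2]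
  have h_moved : univ.filter (fun l => ¬(l ≠ a ∧ l ≠ b)) = {a, b} := by
    ext l
    simp only [mem_filter, mem_univ, true_and, mem_insert, mem_singleton]
    tauto
  rw [Perm.sign_swap hab, ← prod_filter_mul_prod_filter_not univ (fun l => l ≠ a ∧ l ≠ b),
    h_fixed, h_moved, prod_pair hab, swap_apply_left, swap_apply_right, Units.neg_smul, one_smul]
  ring

theorem sum_card_support_eq_two_sign_smul_prod [LinearOrder ι] (M : Matrix ι ι R) :
    ∑ σ ∈ univ.filter (fun σ : Perm ι => #σ.support = 2), Perm.sign σ • ∏ i, M (σ i) i =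
      -∑ p ∈ univ.filter (fun p : ι × ι => p.1 < p.2),
        M p.1 p.2 * M p.2 p.1 * ∏ l ∈ univ.filter (fun l => l ≠ p.1 ∧ l ≠ p.2), M l l := by
  have h_image : univ.filter (fun σ : Perm ι => #σ.support = 2) =
      (univ.filter (fun p : ι × ι => p.1 < p.2)).image (fun p => Equiv.swap p.1 p.2) := by
    ext σ
    simp only [mem_filter, mem_univ, true_and, mem_image, Prod.exists]
    refine ⟨fun hσ => ?_, ?_⟩
    · obtain ⟨x, y, hxy, rfl⟩ := Perm.card_support_eq_two.mp hσ
      rcases hxy.lt_or_gt with hlt | hlt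
      · exact ⟨x, y, hlt, rfl⟩
      · exact ⟨y, x, hlt, Equiv.swap_comm y x⟩
    · rintro ⟨x, y, hlt, rfl⟩
      exact Perm.card_support_swap hlt.ne
  have h_inj : Set.InjOn (fun p : ι × ι => Equiv.swap p.1 p.2)
      (univ.filter fun p : ι × ι => p.1 < p.2) :=
    swap_injOn_lt.mono fun p hp => (mem_filter.mp hp).2
  rw [h_image, sum_image h_inj, ← sum_neg_distrib]
  exact sum_congr rfl fun p hp => sign_swap_smul_prod_apply M (mem_filter.mp hp).2.ne

theorem det_eq_prod_diag_sub_sum_transpositions_add [LinearOrder ι] (M : Matrix ι ι R) :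
    M.det = (∏ k, M k k - ∑ p ∈ univ.filter (fun p : ι × ι => p.1 < p.2),
        M p.1 p.2 * M p.2 p.1 * ∏ l ∈ univ.filter (fun l => l ≠ p.1 ∧ l ≠ p.2), M l l) +
      ∑ σ ∈ univ.filter (fun σ : Perm ι => 3 ≤ #σ.support), Perm.sign σ • ∏ i, M (σ i) i := by
  have h_small : univ.filter (fun σ : Perm ι => ¬3 ≤ #σ.support) =
      insert 1 (univ.filter fun σ : Perm ι => #σ.support = 2) := by
    ext σ
    simp only [mem_filter, mem_univ, true_and, mem_insert, not_le]
    rw [← Perm.card_support_eq_zero]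
    have := σ.card_support_ne_one
    omega
  rw [det_apply, ← sum_filter_not_add_sum_filter univ (fun σ : Perm ι => 3 ≤ #σ.support),
    h_small, sum_insert (by simp), sum_card_support_eq_two_sign_smul_prod]
  simp [sub_eq_add_neg]

theorem prod_one_sub_smul_apply_perm (h : R) (L : Matrix ι ι R) (σ : Perm ι) :
    ∏ i, (1 - h • L) (σ i) i =
      (-h) ^ #σ.support * ((∏ i ∈ σ.support, L (σ i) i) * ∏ i ∈ σ.supportᶜ, (1 - h * L i i)) := by
  have h_moved : ∏ i ∈ σ.support, (1 - h • L) (σ i) i = ∏ i ∈ σ.support, -h * L (σ i) i :=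
    prod_congr rfl fun i hi => by
      simp [sub_apply, one_apply_ne (Perm.mem_support.mp hi)]
  have h_fixed : ∏ i ∈ σ.supportᶜ, (1 - h • L) (σ i) i = ∏ i ∈ σ.supportᶜ, (1 - h * L i i) :=
    prod_congr rfl fun i hi => by
      simp [Perm.notMem_support.mp (mem_compl.mp hi)]
  rw [← prod_mul_prod_compl σ.support, h_moved, h_fixed, prod_mul_distrib, prod_const, mul_assoc]

end Matrix

theorem Asymptotics.isBigO_pow_pow_nhds_zero {𝕜 : Type*} [NormedDivisionRing 𝕜] {m n : ℕ}
    (h : m ≤ n) : (fun x : 𝕜 => x ^ n) =O[nhds 0] fun x => x ^ m := by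
  rcases h.eq_or_lt with rfl | hlt
  · exact isBigO_refl _ _
  · exact (isLittleO_pow_pow hlt).isBigO

theorem Matrix.isBigO_prod_one_sub_smul_apply_perm {𝕜 ι : Type*} [NormedField 𝕜] [Fintype ι]
    [DecidableEq ι] (L : Matrix ι ι 𝕜) {σ : Perm ι} (hσ : 3 ≤ #σ.support) :
    (fun h : 𝕜 => ∏ i, (1 - h • L : Matrix ι ι 𝕜) (σ i) i) =O[nhds 0] fun h => h ^ 3 := by
  set k := #σ.support
  have h_factor : (fun h : 𝕜 => ∏ i, (1 - h • L : Matrix ι ι 𝕜) (σ i) i) = fun h => h ^ k *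
      ((-1) ^ k * ((∏ i ∈ σ.support, L (σ i) i) * ∏ i ∈ σ.supportᶜ, (1 - h * L i i))) :=
    funext fun h => by rw [prod_one_sub_smul_apply_perm, neg_pow]; ring
  have h_bounded : (fun h : 𝕜 => (-1) ^ k *
      ((∏ i ∈ σ.support, L (σ i) i) * ∏ i ∈ σ.supportᶜ, (1 - h * L i i))) =O[nhds 0]
        fun _ => (1 : 𝕜) :=
    (Continuous.tendsto (by fun_prop) 0).isBigO_one 𝕜
  rw [h_factor]
  simpa using (isBigO_pow_pow_nhds_zero hσ).mul h_bounded

theorem stmt_2_general (n : ℕ) (L : Matrix (Fin n) (Fin n) ℝ) :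
    (fun h : ℝ =>
        ((1 - h • L : Matrix (Fin n) (Fin n) ℝ).det -
          (∏ k, (1 - h • L : Matrix (Fin n) (Fin n) ℝ) k k -
            ∑ p ∈ univ.filter (fun p : Fin n × Fin n => p.1 < p.2),
              (1 - h • L : Matrix (Fin n) (Fin n) ℝ) p.1 p.2 *
                (1 - h • L : Matrix (Fin n) (Fin n) ℝ) p.2 p.1 *
                ∏ l ∈ univ.filter (fun l => l ≠ p.1 ∧ l ≠ p.2),
                  (1 - h • L : Matrix (Fin n) (Fin n) ℝ) l l)))
      =O[nhds (0 : ℝ)] fun h : ℝ => h ^ 3 := by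
  simp_rw [Matrix.det_eq_prod_diag_sub_sum_transpositions_add, add_sub_cancel_left]
  refine IsBigO.fun_sum fun σ hσ => ?_
  exact (Matrix.isBigO_prod_one_sub_smul_apply_perm L (mem_filter.mp hσ).2).const_smul_left _

theorem stmt_2 (n : ℕ) (hn : 1 ≤ n) (L : Matrix (Fin n) (Fin n) ℝ) :
    (fun h : ℝ =>
        ((1 - h • L : Matrix (Fin n) (Fin n) ℝ).det -
          (∏ k, (1 - h • L : Matrix (Fin n) (Fin n) ℝ) k k -
            ∑ p ∈ univ.filter (fun p : Fin n × Fin n => p.1 < p.2),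
              (1 - h • L : Matrix (Fin n) (Fin n) ℝ) p.1 p.2 *
                (1 - h • L : Matrix (Fin n) (Fin n) ℝ) p.2 p.1 *
                ∏ l ∈ univ.filter (fun l => l ≠ p.1 ∧ l ≠ p.2),
                  (1 - h • L : Matrix (Fin n) (Fin n) ℝ) l l)))
      =O[nhds (0 : ℝ)] fun h : ℝ => h ^ 3 :=
  stmt_2_general n L
end

section
/- Let n ≥ 1, let L be an n×n real matrix, and let T be a real number. Then the repeated resolvent (implicit Euler) steps converge to the matrix exponential: the sequence of matrices ((I − (T/M)·L)⁻¹)^M converges to exp(T·L) as the natural number M tends to infinity. (For all sufficiently large M the matrix I − (T/M)·L is invertible, so the inverse is the genuine matrix inverse eventually.) -/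
/-!
For `t = M⁻¹ • x` the elements `a = 1 + t` and `b = exp t` commute, so the telescoping identity
`a ^ M - b ^ M = (∑ i < M, a ^ i * b ^ (M - 1 - i)) * (a - b)` together with
`‖a‖, ‖b‖ ≤ exp ‖t‖` and `exp x = b ^ M` gives
`‖(1 + M⁻¹ • x) ^ M - exp x‖ ≤ exp ‖x‖ * (M * ‖exp t - 1 - t‖)`.
The right side tends to `0` because `exp` has derivative `1` at `0`. Applying this to `-x` and
using that inversion is continuous at the unit `exp (-x)`, whose inverse is `exp x`, yields
`(1 - M⁻¹ • x)⁻¹ ^ M → exp x`.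
-/

open Filter Topology NormedSpace Asymptotics

variable {𝔸 : Type*}

theorem Commute.norm_pow_sub_pow_le [SeminormedRing 𝔸] [NormOneClass 𝔸] {a b : 𝔸}
    (h : Commute a b) {C : ℝ} (ha : ‖a‖ ≤ C) (hb : ‖b‖ ≤ C) (M : ℕ) :
    ‖a ^ M - b ^ M‖ ≤ M * C ^ (M - 1) * ‖a - b‖ := by
  have hC : 0 ≤ C := (norm_nonneg a).trans ha
  have hterm : ∀ i ∈ Finset.range M, ‖a ^ i * b ^ (M - 1 - i)‖ ≤ C ^ (M - 1) := by
    intro i hi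
    have hiM : i + (M - 1 - i) = M - 1 := by have := Finset.mem_range.mp hi; omega
    calc ‖a ^ i * b ^ (M - 1 - i)‖ ≤ ‖a‖ ^ i * ‖b‖ ^ (M - 1 - i) :=
          (norm_mul_le _ _).trans (mul_le_mul (norm_pow_le a i) (norm_pow_le b _)
            (norm_nonneg _) (by positivity))
      _ ≤ C ^ i * C ^ (M - 1 - i) := by gcongr
      _ = C ^ (M - 1) := by rw [← pow_add, hiM]
  calc ‖a ^ M - b ^ M‖ = ‖(∑ i ∈ Finset.range M, a ^ i * b ^ (M - 1 - i)) * (a - b)‖ := by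
        rw [h.geom_sum₂_mul]
    _ ≤ (∑ i ∈ Finset.range M, ‖a ^ i * b ^ (M - 1 - i)‖) * ‖a - b‖ :=
        (norm_mul_le _ _).trans (by gcongr; exact norm_sum_le _ _)
    _ ≤ M * C ^ (M - 1) * ‖a - b‖ := by
        gcongr
        simpa using Finset.sum_le_sum hterm

theorem NormedSpace.norm_exp_le_exp_norm [NormedRing 𝔸] [NormedAlgebra ℝ 𝔸] [NormOneClass 𝔸]
    (x : 𝔸) : ‖exp x‖ ≤ Real.exp ‖x‖ := by
  rw [exp_eq_tsum ℝ, Real.exp_eq_exp_ℝ, exp_eq_tsum_div]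
  refine (norm_tsum_le_tsum_norm (norm_expSeries_summable' x)).trans ?_
  refine Summable.tsum_le_tsum (fun i => ?_) (norm_expSeries_summable' x)
    (Real.summable_pow_div_factorial ‖x‖)
  rw [norm_smul, norm_inv, Real.norm_natCast, div_eq_inv_mul]
  gcongr
  exact norm_pow_le x i

section BanachAlgebra

variable [NormedRing 𝔸] [NormedAlgebra ℝ 𝔸] [CompleteSpace 𝔸]

theorem NormedSpace.tendsto_natCast_mul_norm_exp_inv_smul_sub_one_sub (x : 𝔸) :
    Tendsto (fun M : ℕ => (M : ℝ) * ‖exp ((M : ℝ)⁻¹ • x) - 1 - (M : ℝ)⁻¹ • x‖) atTop (𝓝 0) := by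
  have hsmall : Tendsto (fun M : ℕ => (M : ℝ)⁻¹ • x) atTop (𝓝 0) := by
    simpa using (tendsto_inv_atTop_nhds_zero_nat (𝕜 := ℝ)).smul_const x
  have hexp := (hasFDerivAt_iff_isLittleO_nhds_zero.mp
    (hasFDerivAt_exp_zero (𝕂 := ℝ) (𝔸 := 𝔸))).comp_tendsto hsmall
  simp only [Function.comp_def, zero_add, exp_zero, one_apply_eq_self] at hexp
  have hinv : (fun M : ℕ => (M : ℝ)⁻¹ • x) =O[atTop] fun M : ℕ => (M : ℝ)⁻¹ :=
    isBigO_of_le' (c := ‖x‖) _ fun M => by rw [norm_smul, mul_comm]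
  refine (hexp.trans_isBigO hinv).norm_left.tendsto_div_nhds_zero.congr fun M => ?_
  rw [div_inv_eq_mul, mul_comm]

theorem NormedSpace.tendsto_one_add_inv_smul_pow_exp [NormOneClass 𝔸] (x : 𝔸) :
    Tendsto (fun M : ℕ => (1 + (M : ℝ)⁻¹ • x) ^ M) atTop (𝓝 (exp x)) := by
  let : NormedAlgebra ℚ 𝔸 := NormedAlgebra.restrictScalars ℚ ℝ 𝔸
  rw [tendsto_iff_norm_sub_tendsto_zero]
  refine squeeze_zero' (Eventually.of_forall fun _ => norm_nonneg _) ?_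
    (by simpa using (tendsto_natCast_mul_norm_exp_inv_smul_sub_one_sub x).const_mul (Real.exp ‖x‖))
  filter_upwards [eventually_ne_atTop 0] with M hM
  set t := (M : ℝ)⁻¹ • x
  have hMt : (M : ℝ) * ‖t‖ = ‖x‖ := by
    rw [norm_smul, norm_inv, Real.norm_natCast, ← mul_assoc, mul_inv_cancel₀ (by positivity),
      one_mul]
  have hexp : exp x = exp t ^ M := by
    rw [← exp_nsmul, ← Nat.cast_smul_eq_nsmul ℝ, smul_smul, mul_inv_cancel₀ (by positivity),
      one_smul]
  have hpow : Real.exp ‖t‖ ^ (M - 1) ≤ Real.exp ‖x‖ := calc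
    Real.exp ‖t‖ ^ (M - 1) ≤ Real.exp ‖t‖ ^ M :=
      pow_le_pow_right₀ (Real.one_le_exp (norm_nonneg t)) (Nat.sub_le M 1)
    _ = Real.exp ‖x‖ := by rw [← Real.exp_nat_mul, hMt]
  have hone_add : ‖1 + t‖ ≤ Real.exp ‖t‖ :=
    (norm_add_le _ _).trans (by rw [norm_one, add_comm]; exact Real.add_one_le_exp _)
  have hcomm : Commute (1 + t) (exp t) :=
    ((Commute.one_left t).add_left (Commute.refl t)).exp_right
  calc ‖(1 + t) ^ M - exp x‖ = ‖(1 + t) ^ M - exp t ^ M‖ := by rw [hexp]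
    _ ≤ M * Real.exp ‖t‖ ^ (M - 1) * ‖1 + t - exp t‖ :=
      hcomm.norm_pow_sub_pow_le hone_add (norm_exp_le_exp_norm t) M
    _ ≤ Real.exp ‖x‖ * (M * ‖exp t - 1 - t‖) := by
      rw [norm_sub_rev, sub_add_eq_sub_sub, mul_comm (M : ℝ), mul_assoc]
      gcongr

theorem NormedSpace.tendsto_inverse_one_sub_inv_smul_pow_exp [NormOneClass 𝔸] (x : 𝔸) :
    Tendsto (fun M : ℕ => Ring.inverse (1 - (M : ℝ)⁻¹ • x) ^ M) atTop (𝓝 (exp x)) := by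
  let : NormedAlgebra ℚ 𝔸 := NormedAlgebra.restrictScalars ℚ ℝ 𝔸
  have heuler := tendsto_one_add_inv_smul_pow_exp (-x)
  simp only [smul_neg, ← sub_eq_add_neg] at heuler
  have hinv := (NormedRing.inverse_continuousAt (isUnit_exp (-x)).unit).tendsto.comp heuler
  rw [IsUnit.unit_spec, Ring.inverse_exp, neg_neg] at hinv
  simpa only [Function.comp_def, Ring.inverse_pow] using hinv

theorem eventually_isUnit_one_sub_inv_smul (x : 𝔸) :
    ∀ᶠ M : ℕ in atTop, IsUnit (1 - (M : ℝ)⁻¹ • x) := by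
  have h : Tendsto (fun M : ℕ => 1 - (M : ℝ)⁻¹ • x) atTop (𝓝 1) := by
    simpa using tendsto_const_nhds.sub ((tendsto_inv_atTop_nhds_zero_nat (𝕜 := ℝ)).smul_const x)
  exact h.eventually (Units.isOpen.mem_nhds isUnit_one)

end BanachAlgebra

theorem stmt_9 (n : ℕ) (hn : 1 ≤ n) (L : Matrix (Fin n) (Fin n) ℝ) (T : ℝ) :
    (∀ᶠ M : ℕ in atTop, IsUnit ((1 - (T / M) • L : Matrix (Fin n) (Fin n) ℝ))) ∧
    Tendsto (fun M : ℕ => (((1 - (T / M) • L : Matrix (Fin n) (Fin n) ℝ))⁻¹) ^ M)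
      atTop (nhds (NormedSpace.exp (T • L))) := by
  have : Nonempty (Fin n) := Fin.pos_iff_nonempty.mp hn
  -- the ℓ∞ operator norm is a Banach-algebra norm with `‖1‖ = 1` inducing the entrywise topology
  let := Matrix.linftyOpNormedRing (n := Fin n) (α := ℝ)
  let := Matrix.linftyOpNormedAlgebra (n := Fin n) (R := ℝ) (α := ℝ)
  have := Matrix.linfty_opNormOneClass (n := Fin n) (α := ℝ)
  have hscale (M : ℕ) : (T / M) • L = (M : ℝ)⁻¹ • (T • L) := by rw [smul_smul, div_eq_inv_mul]
  simp only [hscale, Matrix.nonsing_inv_eq_ringInverse]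
  exact ⟨eventually_isUnit_one_sub_inv_smul _, tendsto_inverse_one_sub_inv_smul_pow_exp _⟩
end
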